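/- Let q ∈ ℂ with 0 < |q| < 1 and let A(x) = Σ_{n≥0} A_n x^n be a formal power series with m×m matrix coefficients such that A_0 is invertible and non-resonant, i.e., θ_j/θ_i ∉ {q^n : n ≥ 1} for all eigenvalues θ_i, θ_j of A_0. Then there exists a unique formal power series P(x) = Σ_{n≥0} P_n x^n with P_0 = I such that P(qx)^{-1} A(x) P(x) = A_0, i.e., A(x) P(x) = P(qx) A_0 as formal power series. -/

import Mathlib

/-!
Comparing coefficients of `xⁿ` in `A(x) P(x) = P(qx) A₀` gives
`Pₙ (qⁿ A₀) - A₀ Pₙ = Σ_{k<n} A_{n-k} P_k`, so each `Pₙ` is obtained from the lower ones by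
inverting the Sylvester operator `X ↦ X B - A₀ X` with `B = qⁿ A₀`. Non-resonance says that
`A₀` and `B` have disjoint spectra, which makes this operator injective: from `A₀ X = X B` we get
`0 = χ_{A₀}(A₀) X = X χ_{A₀}(B)`, and `χ_{A₀}(B)` is invertible by the spectral mapping theorem.
-/

open Finset Polynomial

theorem Polynomial.aeval_mul_eq_mul_aeval {R A : Type*} [CommSemiring R] [Semiring A]
    [Algebra R A] {a x b : A} (h : a * x = x * b) (p : R[X]) :
    aeval a p * x = x * aeval b p := by
  induction p using Polynomial.induction_on' with
  | add p r hp hr => rw [map_add, map_add, add_mul, mul_add, hp, hr]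
  | monomial n c =>
    have hpow : a ^ n * x = x * b ^ n := ((show SemiconjBy x b a from h.symm).pow_right n).symm
    rw [aeval_monomial, aeval_monomial, mul_assoc, hpow, ← mul_assoc, Algebra.commutes, mul_assoc]

namespace Matrix

variable {n K : Type*} [Fintype n] [DecidableEq n] [Field K] [IsAlgClosed K]

theorem eq_zero_of_mul_eq_mul_of_disjoint_spectrum {A B X : Matrix n n K} (hX : A * X = X * B)
    (hAB : Disjoint (spectrum K A) (spectrum K B)) : X = 0 := by
  nontriviality Matrix n n K
  have hX0 : X * aeval B A.charpoly = 0 := by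
    rw [← aeval_mul_eq_mul_aeval hX, aeval_self_charpoly, zero_mul]
  have hunit : IsUnit (aeval B A.charpoly) := by
    rw [← spectrum.zero_notMem_iff K, spectrum.map_polynomial_aeval_of_nonempty _ _
      (spectrum.nonempty_of_isAlgClosed_of_finiteDimensional K B)]
    rintro ⟨μ, hμB, hμA⟩
    exact hAB.notMem_of_mem_right hμB (mem_spectrum_iff_isRoot_charpoly.mpr hμA)
  exact hunit.mul_left_eq_zero.mp hX0

theorem bijective_mulRight_sub_mulLeft_of_disjoint_spectrum {A B : Matrix n n K}
    (hAB : Disjoint (spectrum K A) (spectrum K B)) :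
    Function.Bijective (LinearMap.mulRight K B - LinearMap.mulLeft K A) := by
  have hinj : Function.Injective (LinearMap.mulRight K B - LinearMap.mulLeft K A) := by
    rw [← LinearMap.ker_eq_bot, LinearMap.ker_eq_bot']
    intro X hX
    have hAX : A * X = X * B := (sub_eq_zero.mp hX).symm
    exact eq_zero_of_mul_eq_mul_of_disjoint_spectrum hAX hAB
  exact ⟨hinj, LinearMap.injective_iff_surjective.mp hinj⟩

end Matrix

theorem spectrum.disjoint_smul_of_forall_div_ne {𝕜 A : Type*} [Field 𝕜] [Ring A] [Algebra 𝕜 A]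
    {a : A} (ha : IsUnit a) {c : 𝕜} (hc : ∀ θ ∈ spectrum 𝕜 a, ∀ θ' ∈ spectrum 𝕜 a, θ' / θ ≠ c) :
    Disjoint (spectrum 𝕜 a) (spectrum 𝕜 (c • a)) := by
  rcases (spectrum 𝕜 a).eq_empty_or_nonempty with hempty | hne
  · simp [hempty]
  nontriviality A using spectrum.of_subsingleton
  rw [Set.disjoint_right, spectrum.smul_eq_smul c a hne]
  rintro _ ⟨θ, hθ, rfl⟩ hcθ
  have hθ0 : θ ≠ 0 := ne_of_mem_of_not_mem hθ (spectrum.zero_notMem 𝕜 ha)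
  exact hc θ hθ _ hcθ (mul_div_cancel_right₀ c hθ0)

theorem existsUnique_seq_of_zero_of_succ {M : Type*} (a : M) (g : ℕ → (ℕ → M) → M)
    (hg : ∀ n P Q, (∀ k ≤ n, P k = Q k) → g n P = g n Q) :
    ∃! P : ℕ → M, P 0 = a ∧ ∀ n, P (n + 1) = g n P := by
  let P : ℕ → M := Nat.strongRec (motive := fun _ => M) fun n ih =>
    match n, ih with
    | 0, _ => a
    | n + 1, ih => g n fun k => if hk : k ≤ n then ih k (Nat.lt_succ_of_le hk) else a
  have hP (n : ℕ) : P (n + 1) = g n P := by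
    exact (Nat.strongRec_eq _ (n + 1)).trans (hg n _ _ fun k hk => dif_pos hk)
  have hP0 : P 0 = a := Nat.strongRec_eq _ 0
  refine ⟨P, ⟨hP0, hP⟩, fun Q ⟨hQ0, hQ⟩ => funext fun n => ?_⟩
  induction n using Nat.strong_induction_on with
  | _ n ih =>
    cases n with
    | zero => exact hQ0.trans hP0.symm
    | succ n =>
      rw [hQ, hP]
      exact hg n _ _ fun k hk => ih k (Nat.lt_succ_of_le hk)

theorem sum_range_mul_eq_smul_mul_succ_iff {K R : Type*} [CommSemiring K] [Ring R] [Algebra K R]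
    (A P : ℕ → R) (q : K) (n : ℕ) :
    ∑ k ∈ range (n + 2), A (n + 1 - k) * P k = q ^ (n + 1) • (P (n + 1) * A 0) ↔
      (LinearMap.mulRight K (q ^ (n + 1) • A 0) - LinearMap.mulLeft K (A 0)) (P (n + 1)) =
        ∑ k ∈ range (n + 1), A (n + 1 - k) * P k := by
  rw [sum_range_succ, Nat.sub_self, LinearMap.sub_apply, LinearMap.mulRight_apply,
    LinearMap.mulLeft_apply, mul_smul_comm, sub_eq_iff_eq_add, eq_comm]

theorem formal_normal_form_fuchsian_general
    (m : ℕ) (q : ℂ)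
    (A : ℕ → Matrix (Fin m) (Fin m) ℂ)
    (hA0 : IsUnit (A 0))
    (hres : ∀ θi ∈ spectrum ℂ (A 0), ∀ θj ∈ spectrum ℂ (A 0),
        ∀ n : ℕ, 1 ≤ n → θj / θi ≠ q ^ n) :
    ∃! P : ℕ → Matrix (Fin m) (Fin m) ℂ,
      P 0 = 1 ∧
      ∀ n : ℕ, ∑ k ∈ Finset.range (n + 1), A (n - k) * P k = q ^ n • (P n * A 0) := by
  have hbij (n : ℕ) := Matrix.bijective_mulRight_sub_mulLeft_of_disjoint_spectrum
    (spectrum.disjoint_smul_of_forall_div_ne hA0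
      fun θ hθ θ' hθ' => hres θ hθ θ' hθ' (n + 1) n.succ_pos)
  let e (n : ℕ) := LinearEquiv.ofBijective _ (hbij n)
  refine (existsUnique_congr fun P => ?_).mpr <| existsUnique_seq_of_zero_of_succ 1
    (fun n P => (e n).symm (∑ k ∈ range (n + 1), A (n + 1 - k) * P k))
    fun n P Q hPQ => congrArg _ <| sum_congr rfl fun k hk => by
      rw [hPQ k (Nat.lt_succ_iff.mp (mem_range.mp hk))]
  refine and_congr_right fun hP0 => ?_
  rw [← Nat.and_forall_add_one]
  simp only [zero_add, range_one, sum_singleton, hP0, pow_zero,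
    one_smul, mul_one, one_mul, true_and, LinearEquiv.eq_symm_apply]
  exact forall_congr' fun n => sum_range_mul_eq_smul_mul_succ_iff A P q n

/-- Formal normal form of a Fuchsian linear q-difference system at x = 0:
there is a unique formal power series P(x) with P₀ = I such that
A(x) P(x) = P(qx) A₀, where the equality is coefficientwise. -/
theorem formal_normal_form_fuchsian
    (m : ℕ) (q : ℂ) (hq : 0 < ‖q‖) (hq1 : ‖q‖ < 1)
    (A : ℕ → Matrix (Fin m) (Fin m) ℂ)
    (hA0 : IsUnit (A 0))
    (hres : ∀ θi ∈ spectrum ℂ (A 0), ∀ θj ∈ spectrum ℂ (A 0),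
        ∀ n : ℕ, 1 ≤ n → θj / θi ≠ q ^ n) :
    ∃! P : ℕ → Matrix (Fin m) (Fin m) ℂ,
      P 0 = 1 ∧
      ∀ n : ℕ, ∑ k ∈ Finset.range (n + 1), A (n - k) * P k = q ^ n • (P n * A 0) :=
  formal_normal_form_fuchsian_general m q A hA0 hres
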